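/- arXiv:1004.1326 — 2 statements merged into one kernel-verified Lean document; each statement's English description precedes it below -/
import Mathlib

section
/- Let ξ be irrational with convergents p_k/q_k, x = (ξ, 1)ᵀ, and let γ ∈ SL(2,ℤ) satisfy |γ| ≤ q_{k+1}/2 in the sup norm on entries, for some k ≥ 1. Then |γ x| ≥ 1/(2 q_k), where |·| on ℝ² is the sup norm. -/
open Matrix MeasureTheory

/-- Denominator `q k` of the `k`-th convergent of the continued fraction of `ξ`. -/
noncomputable def qden (ξ : ℝ) (k : ℕ) : ℝ := (GenContFract.of ξ).dens k

/-- Numerator `p k` of the `k`-th convergent of the continued fraction of `ξ`. -/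
noncomputable def pnum (ξ : ℝ) (k : ℕ) : ℝ := (GenContFract.of ξ).nums k

/-- Action of an integer matrix on `ℝ²` by left multiplication. -/
noncomputable def act (g : Matrix (Fin 2) (Fin 2) ℤ) (x : Fin 2 → ℝ) : Fin 2 → ℝ :=
  (g.map (Int.cast : ℤ → ℝ)).mulVec x

/-- Sup norm of an integer `2 × 2` matrix. -/
noncomputable def mnorm (g : Matrix (Fin 2) (Fin 2) ℤ) : ℝ :=
  max (max |(g 0 0 : ℝ)| |(g 0 1 : ℝ)|) (max |(g 1 0 : ℝ)| |(g 1 1 : ℝ)|)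

/-- Sup norm on `ℝ²`. -/
noncomputable def vnorm (v : Fin 2 → ℝ) : ℝ := max |v 0| |v 1|

/-- The set of exponents `w` such that `|v α + u| ≤ |v| ^ (-w)` has infinitely many
integer solutions `(v, u)`; its supremum is the irrationality measure `ω(α)`. -/
def omegaSet (α : ℝ) : Set ℝ :=
  {w : ℝ | {p : ℤ × ℤ | |(p.1 : ℝ) * α + (p.2 : ℝ)| ≤ |(p.1 : ℝ)| ^ (-w)}.Infinite}

/-- The set of exponents `μ` such that `|γ x - y| ≤ |γ| ^ (-μ)` for infinitely many
`γ ∈ SL(2, ℤ)`; its supremum is `μ(x, y)`. -/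
def muSet (x y : Fin 2 → ℝ) : Set ℝ :=
  {μ : ℝ | {γ : Matrix (Fin 2) (Fin 2) ℤ |
    γ.det = 1 ∧ vnorm (act γ x - y) ≤ mnorm γ ^ (-μ)}.Infinite}

/-- The set of exponents `μ` such that for all sufficiently large `T` there is
`γ ∈ SL(2, ℤ)` with `|γ| ≤ T` and `|γ x - y| ≤ T ^ (-μ)`; its supremum is `μ̂(x, y)`. -/
def muHatSet (x y : Fin 2 → ℝ) : Set ℝ :=
  {μ : ℝ | ∃ T₀ : ℝ, ∀ T : ℝ, T₀ ≤ T → ∃ γ : Matrix (Fin 2) (Fin 2) ℤ,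
    γ.det = 1 ∧ mnorm γ ≤ T ∧ vnorm (act γ x - y) ≤ T ^ (-μ)}

/-! If `|γ x| < 1 / (2 q_k)`, every row `(u, v)` of `γ` satisfies `|u| ≤ q_{k+1} / 2` and
`|u ξ + v| < 1 / (2 q_k)`. As `|q_k ξ - p_k| ≤ 1 / q_{k+1}`, the integer
`u p_k + v q_k = q_k (u ξ + v) - u (q_k ξ - p_k)` has absolute value `< 1/2 + 1/2`, hence vanishes.
So `γ (p_k, q_k)ᵀ = 0`, which is impossible for `γ ∈ SL(2, ℤ)` because `q_k ≥ 1`. -/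

namespace GenContFract

-- `GenContFract.of` is written out because `open Matrix` makes plain `of` mean `Matrix.of`.
variable {K : Type*} [Field K] [LinearOrder K] [FloorRing K]

theorem exists_int_pair_eq_contsAux (v : K) (n : ℕ) :
    ∃ c : Pair ℤ, (GenContFract.of v).contsAux n = c.map (↑) := by
  induction n using Nat.twoStepInduction with
  | zero => exact ⟨⟨1, 0⟩, by simp [zeroth_contAux_eq_one_zero, Pair.map]⟩
  | one => exact ⟨⟨⌊v⌋, 1⟩, by simp [first_contAux_eq_h_one, Pair.map]⟩
  | more n ih₀ ih₁ =>
    rcases hs : (GenContFract.of v).s.get? n with _ | gp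
    · rwa [contsAux_stable_of_terminated (by omega : n < n + 2) hs]
    · obtain ⟨ha, z, hz⟩ := of_partNum_eq_one_and_exists_int_partDen_eq hs
      obtain ⟨c₀, hc₀⟩ := ih₀
      obtain ⟨c₁, hc₁⟩ := ih₁
      refine ⟨⟨z * c₁.a + c₀.a, z * c₁.b + c₀.b⟩, ?_⟩
      rw [contsAux_recurrence hs hc₀ hc₁, ha, hz]
      simp [Pair.map]

theorem exists_int_eq_nums (v : K) (n : ℕ) : ∃ p : ℤ, (GenContFract.of v).nums n = p := by
  obtain ⟨c, hc⟩ := exists_int_pair_eq_contsAux v (n + 1)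
  exact ⟨c.a, by rw [num_eq_conts_a, nth_cont_eq_succ_nth_contAux, hc]; rfl⟩

theorem exists_int_eq_dens (v : K) (n : ℕ) : ∃ q : ℤ, (GenContFract.of v).dens n = q := by
  obtain ⟨c, hc⟩ := exists_int_pair_eq_contsAux v (n + 1)
  exact ⟨c.b, by rw [den_eq_conts_b, nth_cont_eq_succ_nth_contAux, hc]; rfl⟩

variable [IsStrictOrderedRing K]

theorem one_le_dens (v : K) (n : ℕ) : 1 ≤ (GenContFract.of v).dens n := by
  rw [← zeroth_den_eq_one (g := GenContFract.of v)]
  exact monotone_nat_of_le_succ (f := (GenContFract.of v).dens) (fun _ ↦ of_den_mono) n.zero_le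

theorem abs_mul_dens_sub_nums_le {v : K} {n : ℕ} (h : ¬(GenContFract.of v).TerminatedAt n) :
    |v * (GenContFract.of v).dens n - (GenContFract.of v).nums n| ≤
      1 / (GenContFract.of v).dens (n + 1) := by
  set g := GenContFract.of v
  have hq : 0 < g.dens n := zero_lt_one.trans_le (one_le_dens v n)
  have hconv : |v - g.nums n / g.dens n| ≤ 1 / (g.dens n * g.dens (n + 1)) :=
    conv_eq_num_div_den (g := g) ▸ abs_sub_convs_le h
  calc |v * g.dens n - g.nums n| = |v - g.nums n / g.dens n| * g.dens n := by
        rw [← abs_of_pos hq, ← abs_mul, abs_of_pos hq, sub_mul, div_mul_cancel₀ _ hq.ne']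
    _ ≤ 1 / (g.dens n * g.dens (n + 1)) * g.dens n := by gcongr
    _ = 1 / g.dens (n + 1) := by field_simp

end GenContFract

theorem Irrational.not_terminatedAt {ξ : ℝ} (hξ : Irrational ξ) (n : ℕ) :
    ¬(GenContFract.of ξ).TerminatedAt n := fun h ↦ by
  obtain ⟨q, hq⟩ := (GenContFract.terminates_iff_rat ξ).mp ⟨n, h⟩
  exact hξ ⟨q, hq.symm⟩

theorem int_mul_add_mul_eq_zero_of_approx {ξ B : ℝ} {p q u v : ℤ} (hq : 0 < q)
    (hpq : |ξ * q - p| ≤ 1 / B) (hu : |(u : ℝ)| ≤ B / 2) (huv : |u * ξ + v| < 1 / (2 * q)) :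
    u * p + v * q = 0 := by
  have hq' : (0 : ℝ) < q := by exact_mod_cast hq
  have hlt : |((u * p + v * q : ℤ) : ℝ)| < 1 := calc
    |((u * p + v * q : ℤ) : ℝ)| = |q * (u * ξ + v) - u * (ξ * q - p)| := by push_cast; ring_nf
    _ ≤ q * |u * ξ + v| + |(u : ℝ)| * |ξ * q - p| := by
      rw [← abs_of_pos hq', ← abs_mul, ← abs_mul, abs_of_pos hq']; exact abs_sub _ _
    _ < q * (1 / (2 * q)) + B / 2 * (1 / B) :=
      add_lt_add_of_lt_of_le (by gcongr) (by gcongr; exact (abs_nonneg _).trans hu)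
    _ = 1 / 2 + B / B / 2 := by field_simp
    _ ≤ 1 := by linarith [div_self_le_one B]
  exact Int.abs_lt_one_iff.mp (by exact_mod_cast hlt)

lemma act_apply (γ : Matrix (Fin 2) (Fin 2) ℤ) (ξ : ℝ) (i : Fin 2) :
    act γ ![ξ, 1] i = γ i 0 * ξ + γ i 1 := by
  simp [act, Matrix.mulVec, dotProduct, Fin.sum_univ_two]

lemma abs_le_mnorm (γ : Matrix (Fin 2) (Fin 2) ℤ) (i j : Fin 2) : |(γ i j : ℝ)| ≤ mnorm γ := by
  unfold mnorm; fin_cases i <;> fin_cases j <;> simp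

lemma abs_le_vnorm (v : Fin 2 → ℝ) (i : Fin 2) : |v i| ≤ vnorm v := by
  unfold vnorm; fin_cases i <;> simp

theorem stmt3_general (ξ : ℝ) (hξ : Irrational ξ) (k : ℕ)
    (γ : Matrix (Fin 2) (Fin 2) ℤ) (hγ : γ.det = 1) (hn : mnorm γ ≤ qden ξ (k + 1) / 2) :
    1 / (2 * qden ξ k) ≤ vnorm (act γ ![ξ, 1]) := by
  obtain ⟨p, hp⟩ := GenContFract.exists_int_eq_nums ξ k
  obtain ⟨q, hq⟩ := GenContFract.exists_int_eq_dens ξ k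
  have hq_pos : 0 < q := by exact_mod_cast hq ▸ zero_lt_one.trans_le (GenContFract.one_le_dens ξ k)
  have happrox := GenContFract.abs_mul_dens_sub_nums_le (hξ.not_terminatedAt k)
  rw [hp, hq] at happrox
  by_contra! hsmall
  rw [qden, hq] at hsmall
  have hrows : γ *ᵥ ![p, q] = 0 := by
    ext i
    have := int_mul_add_mul_eq_zero_of_approx hq_pos happrox ((abs_le_mnorm γ i 0).trans hn)
      (act_apply γ ξ i ▸ (abs_le_vnorm _ i).trans_lt hsmall)
    simpa [Matrix.mulVec, dotProduct, Fin.sum_univ_two] using this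
  have hpq_zero := Matrix.eq_zero_of_mulVec_eq_zero (by simp [hγ]) hrows
  exact hq_pos.ne' (by simpa using congr_fun hpq_zero 1)

/-- if `γ ∈ SL(2, ℤ)` has norm `|γ| ≤ q_{k+1}/2`, then `|γ x| ≥ 1/(2 q_k)`
for `x = (ξ, 1)ᵀ`. -/
theorem stmt3 (ξ : ℝ) (hξ : Irrational ξ) (k : ℕ) (hk : 1 ≤ k)
    (γ : Matrix (Fin 2) (Fin 2) ℤ) (hγ : γ.det = 1) (hn : mnorm γ ≤ qden ξ (k + 1) / 2) :
    1 / (2 * qden ξ k) ≤ vnorm (act γ ![ξ, 1]) :=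
  stmt3_general ξ hξ k γ hγ hn
end

section
/- Let ξ < 0 be irrational. Then the set {γ·(ξ,1)ᵀ : γ ∈ Γ₊} ∩ ℝ₊², where Γ₊ is the set of matrices in SL(2,ℤ) with all entries nonnegative, is dense in the closed positive quadrant ℝ₊². -/
open Matrix MeasureTheory

/-!
Let `S = Γ₊ (ξ, 1)ᵀ ∩ ℝ₊²`. Since `Γ₊` is a monoid of nonnegative matrices, `S` and hence its
closure are `Γ₊`-invariant. A one-sided Dirichlet approximation `0 < qξ + p < ε` with `(q, p)`
coprime is the bottom row of a matrix in `SL(2, ℤ)`, whose top row can be shifted by multiples of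
`(q, p)` until the first coordinate of `γ (ξ, 1)ᵀ` lies in `[s, s + ε)`; as `ξ < 0`, such a
matrix automatically has nonnegative entries. So the closure of `S` contains the ray `ℝ₊ × {0}`,
hence its image `{s (a, c)}` under `Γ₊`, which is dense in the quadrant: every positive rational
`c / a` in lowest terms is the first column of a matrix in `Γ₊`.
-/

open Set

def gammaPlus : Submonoid (Matrix (Fin 2) (Fin 2) ℤ) where
  carrier := {γ | γ.det = 1 ∧ ∀ i j, 0 ≤ γ i j}
  mul_mem' := by
    rintro g h ⟨hg, hg₀⟩ ⟨hh, hh₀⟩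
    refine ⟨by rw [det_mul, hg, hh, one_mul], fun i j => ?_⟩
    rw [mul_apply]
    exact Finset.sum_nonneg fun k _ => mul_nonneg (hg₀ i k) (hh₀ k j)
  one_mem' := ⟨det_one, fun i j => by rw [one_apply]; split_ifs <;> norm_num⟩

lemma act_mul (g h : Matrix (Fin 2) (Fin 2) ℤ) (x : Fin 2 → ℝ) :
    act (g * h) x = act g (act h x) := by
  simp only [act, mulVec_mulVec]
  exact congrArg (· *ᵥ x) (Matrix.map_mul (f := Int.castRingHom ℝ))

lemma act_apply_zero (γ : Matrix (Fin 2) (Fin 2) ℤ) (x : Fin 2 → ℝ) :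
    act γ x 0 = γ 0 0 * x 0 + γ 0 1 * x 1 := by
  simp [act, mulVec, dotProduct, Fin.sum_univ_two]

lemma act_apply_one (γ : Matrix (Fin 2) (Fin 2) ℤ) (x : Fin 2 → ℝ) :
    act γ x 1 = γ 1 0 * x 0 + γ 1 1 * x 1 := by
  simp [act, mulVec, dotProduct, Fin.sum_univ_two]

lemma act_of (a b c d : ℤ) (x : Fin 2 → ℝ) :
    act !![a, b; c, d] x = ![a * x 0 + b * x 1, c * x 0 + d * x 1] := by
  ext i
  fin_cases i
  · exact act_apply_zero _ x
  · exact act_apply_one _ x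

lemma act_nonneg {γ : Matrix (Fin 2) (Fin 2) ℤ} (hγ : ∀ i j, 0 ≤ γ i j) {x : Fin 2 → ℝ}
    (hx : 0 ≤ x) : 0 ≤ act γ x := fun i => by
  simp only [act, mulVec, dotProduct, map_apply, Pi.zero_apply]
  exact Finset.sum_nonneg fun j _ => mul_nonneg (Int.cast_nonneg_iff.mpr (hγ i j)) (hx j)

lemma continuous_act (γ : Matrix (Fin 2) (Fin 2) ℤ) : Continuous (act γ) :=
  continuous_const.matrix_mulVec continuous_id

def posOrbit (ξ : ℝ) : Set (Fin 2 → ℝ) := {w | ∃ γ ∈ gammaPlus, w = act γ ![ξ, 1]} ∩ Ici 0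

lemma act_mem_closure_posOrbit {ξ : ℝ} {g : Matrix (Fin 2) (Fin 2) ℤ} (hg : g ∈ gammaPlus)
    {w : Fin 2 → ℝ} (hw : w ∈ closure (posOrbit ξ)) : act g w ∈ closure (posOrbit ξ) := by
  refine map_mem_closure (continuous_act g) hw ?_
  rintro _ ⟨⟨γ, hγ, rfl⟩, hw₀⟩
  exact ⟨⟨g * γ, mul_mem hg hγ, (act_mul g γ _).symm⟩, act_nonneg hg.2 hw₀⟩

lemma Irrational.exists_int_mul_add_mem_Ioo {ξ : ℝ} (hξ : Irrational ξ) {ε : ℝ} (hε : 0 < ε) :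
    ∃ q p : ℤ, 0 < q ∧ 0 < q * ξ + p ∧ q * ξ + p < ε := by
  have hne : ∀ q p : ℤ, q ≠ 0 → (q * ξ + p : ℝ) ≠ 0 := fun q p hq =>
    ((hξ.intCast_mul hq).add_intCast p).ne_zero
  obtain ⟨n, hn⟩ := exists_nat_one_div_lt (lt_min hε one_pos)
  obtain ⟨j, k, hk, -, hjk⟩ := Real.exists_int_int_abs_mul_sub_le ξ n.succ_pos
  set θ : ℝ := k * ξ + ((-j : ℤ) : ℝ)
  have hθ : |θ| < min ε 1 := by
    refine lt_of_le_of_lt ?_ hn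
    push_cast [θ]
    exact hjk.trans (one_div_le_one_div_of_le (by positivity) (by push_cast; linarith))
  obtain ⟨hθε, hθ1⟩ := lt_min_iff.mp hθ
  rcases (hne k (-j) hk.ne').symm.lt_or_gt with hθ₀ | hθ₀
  · exact ⟨k, -j, hk, hθ₀, (le_abs_self θ).trans_lt hθε⟩
  -- for `m = ⌊1 / -θ⌋`, the number `(m k) ξ + (1 - m j) = 1 + m θ` lies in `[0, -θ)`
  have hθ' : 0 < -θ := neg_pos.mpr hθ₀
  rw [abs_of_neg hθ₀] at hθε hθ1
  set m := ⌊1 / -θ⌋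
  have hm : 1 ≤ m := Int.le_floor.mpr (by rw [Int.cast_one, le_div_iff₀ hθ']; linarith)
  have hm_le : (m : ℝ) * -θ ≤ 1 := (le_div_iff₀ hθ').mp (Int.floor_le _)
  have hm_lt : 1 < ((m : ℝ) + 1) * -θ := (div_lt_iff₀ hθ').mp (Int.lt_floor_add_one _)
  have hval : ((m * k : ℤ) : ℝ) * ξ + ((1 + m * -j : ℤ) : ℝ) = 1 + m * θ := by
    push_cast [θ]; ring
  refine ⟨m * k, 1 + m * -j, by positivity, ?_, by rw [hval]; linarith⟩
  exact lt_of_le_of_ne (by rw [hval]; linarith) (hne _ _ (by positivity)).symm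

lemma Irrational.exists_coprime_mul_add_mem_Ioo {ξ : ℝ} (hξ : Irrational ξ) {ε : ℝ}
    (hε : 0 < ε) : ∃ q p : ℤ, 0 < q ∧ IsCoprime q p ∧ 0 < q * ξ + p ∧ q * ξ + p < ε := by
  obtain ⟨q, p, hq, hpos, hlt⟩ := hξ.exists_int_mul_add_mem_Ioo hε
  obtain ⟨g, q', p', hg, hcop, rfl, rfl⟩ :=
    Int.exists_gcd_one' (Int.gcd_pos_of_ne_zero_left p hq.ne')
  have hg₁ : (1 : ℝ) ≤ g := by exact_mod_cast hg
  have hval : ((q' * g : ℤ) : ℝ) * ξ + ((p' * g : ℤ) : ℝ) = g * (q' * ξ + p') := by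
    push_cast; ring
  rw [hval] at hpos hlt
  have hpos' : 0 < (q' * ξ + p' : ℝ) := pos_of_mul_pos_right hpos (by positivity)
  exact ⟨q', p', pos_of_mul_pos_left hq (by positivity), Int.isCoprime_iff_gcd_eq_one.mpr hcop,
    hpos', by nlinarith⟩

lemma mem_gammaPlus_of_act_nonneg {ξ : ℝ} (hξ : ξ < 0) {γ : Matrix (Fin 2) (Fin 2) ℤ}
    (hdet : γ.det = 1) (h₁₀ : 0 ≤ γ 1 0) (h₀ : 0 ≤ act γ ![ξ, 1] 0)
    (h₁ : 0 < act γ ![ξ, 1] 1) : γ ∈ gammaPlus := by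
  have hdetR : (γ 0 0 * γ 1 1 - γ 0 1 * γ 1 0 : ℝ) = 1 := by
    rw [det_fin_two] at hdet; exact_mod_cast hdet
  simp only [act_apply_zero, act_apply_one, cons_val_zero, cons_val_one, mul_one] at h₀ h₁
  have h₁₀R : (0 : ℝ) ≤ γ 1 0 := by exact_mod_cast h₁₀
  -- for `w = γ (ξ, 1)ᵀ` the determinant reads `γ₀₀ w₁ - γ₁₀ w₀ = 1`
  have hkey : (γ 0 0 : ℝ) * (γ 1 0 * ξ + γ 1 1) = 1 + γ 1 0 * (γ 0 0 * ξ + γ 0 1) := by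
    linear_combination hdetR
  have h₀₀ : (0 : ℝ) < γ 0 0 := pos_of_mul_pos_left (hkey ▸ by positivity) h₁.le
  have h₀₁ : (0 : ℝ) ≤ γ 0 1 := by nlinarith
  have h₁₁ : (0 : ℝ) ≤ γ 1 1 := by nlinarith
  refine ⟨hdet, fun i j => ?_⟩
  fin_cases i <;> fin_cases j
  · exact_mod_cast h₀₀.le
  · exact_mod_cast h₀₁
  · exact h₁₀
  · exact_mod_cast h₁₁

lemma exists_mem_gammaPlus_act_mem_Ico {ξ : ℝ} (hξ : Irrational ξ) (hneg : ξ < 0) {s ε : ℝ}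
    (hs : 0 ≤ s) (hε : 0 < ε) : ∃ γ ∈ gammaPlus,
      s ≤ act γ ![ξ, 1] 0 ∧ act γ ![ξ, 1] 0 < s + ε ∧
      0 < act γ ![ξ, 1] 1 ∧ act γ ![ξ, 1] 1 < ε := by
  obtain ⟨q, p, hq, ⟨u, v, huv⟩, he₀, heε⟩ := hξ.exists_coprime_mul_add_mem_Ioo hε
  set e : ℝ := q * ξ + p
  set t : ℤ := ⌈(s - (v * ξ - u)) / e⌉
  have ht₁ : s ≤ v * ξ - u + t * e := by
    linarith [(div_le_iff₀ he₀).mp (Int.le_ceil ((s - (v * ξ - u)) / e))]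
  have ht₂ : v * ξ - u + t * e < s + e := by
    linarith [(lt_div_iff₀ he₀).mp
      (sub_lt_iff_lt_add.mpr (Int.ceil_lt_add_one ((s - (v * ξ - u)) / e)))]
  set γ : Matrix (Fin 2) (Fin 2) ℤ := !![v + t * q, -u + t * p; q, p]
  have hact₀ : act γ ![ξ, 1] 0 = v * ξ - u + t * e := by
    rw [act_of, cons_val_zero, cons_val_zero, cons_val_one]
    push_cast [e]; ring
  have hact₁ : act γ ![ξ, 1] 1 = e := by
    rw [act_of, cons_val_one, cons_val_zero, cons_val_one]
    push_cast [e]; ring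
  have hdet : γ.det = 1 := by
    rw [det_fin_two_of]; linear_combination huv
  exact ⟨γ, mem_gammaPlus_of_act_nonneg hneg hdet hq.le (by linarith) (by rwa [hact₁]),
    by linarith, by linarith, by rwa [hact₁], by rwa [hact₁]⟩

lemma ray_mem_closure_posOrbit {ξ : ℝ} (hξ : Irrational ξ) (hneg : ξ < 0) {s : ℝ} (hs : 0 ≤ s) :
    ![s, 0] ∈ closure (posOrbit ξ) := by
  refine Metric.mem_closure_iff.mpr fun ε hε => ?_
  obtain ⟨γ, hγ, h₀, h₀', h₁, h₁'⟩ := exists_mem_gammaPlus_act_mem_Ico hξ hneg hs hε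
  refine ⟨act γ ![ξ, 1], ⟨⟨γ, hγ, rfl⟩, Fin.forall_fin_two.mpr ⟨hs.trans h₀, h₁.le⟩⟩, ?_⟩
  rw [dist_pi_lt_iff hε, Fin.forall_fin_two]
  simp only [Real.dist_eq, abs_lt, cons_val_zero, cons_val_one]
  refine ⟨⟨?_, ?_⟩, ?_, ?_⟩ <;> linarith

lemma IsCoprime.exists_nonneg_mul_sub_mul_eq_one {a c : ℤ} (h : IsCoprime a c) (ha : 0 < a)
    (hc : 0 < c) : ∃ b d : ℤ, 0 ≤ b ∧ 0 ≤ d ∧ a * d - b * c = 1 := by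
  obtain ⟨u, v, huv⟩ := h
  have hk : 0 ≤ |u| + |v| := by positivity
  -- shifting `(b, d)` by multiples of `(a, c)` preserves `a * d - b * c`
  refine ⟨-v + (|u| + |v|) * a, u + (|u| + |v|) * c, ?_, ?_, by linear_combination huv⟩
  · nlinarith [mul_nonneg hk (by omega : (0 : ℤ) ≤ a - 1), abs_nonneg u, le_abs_self v]
  · nlinarith [mul_nonneg hk (by omega : (0 : ℤ) ≤ c - 1), abs_nonneg v, neg_abs_le u]

lemma mem_closure_of_forall_act_ray_mem {t : Set (Fin 2 → ℝ)}
    (ht : ∀ γ ∈ gammaPlus, ∀ s : ℝ, 0 ≤ s → act γ ![s, 0] ∈ t) {z : Fin 2 → ℝ}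
    (hz₀ : 0 < z 0) (hz₁ : 0 < z 1) : z ∈ closure t := by
  refine Metric.mem_closure_iff.mpr fun ε hε => ?_
  obtain ⟨r, hr₁, hr₂⟩ := exists_rat_btwn (lt_add_of_pos_right (z 1 / z 0) (div_pos hε hz₀))
  have hnum : 0 < r.num := Rat.num_pos.mpr (by exact_mod_cast (div_pos hz₁ hz₀).trans hr₁)
  obtain ⟨b, d, hb, hd, hdet⟩ :=
    r.isCoprime_num_den.symm.exists_nonneg_mul_sub_mul_eq_one (by exact_mod_cast r.den_pos) hnum
  set γ : Matrix (Fin 2) (Fin 2) ℤ := !![(r.den : ℤ), b; r.num, d]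
  have hγ : γ ∈ gammaPlus := by
    refine ⟨by rw [det_fin_two_of]; exact hdet, fun i j => ?_⟩
    fin_cases i <;> fin_cases j
    exacts [Int.natCast_nonneg _, hb, hnum.le, hd]
  have hact : act γ ![z 0 / r.den, 0] = ![z 0, z 0 * r] := by
    simp only [γ, act_of, cons_val_zero, cons_val_one, mul_zero, add_zero, Int.cast_natCast,
      Rat.cast_def, vecCons_inj, and_true]
    exact ⟨mul_div_cancel₀ _ (by positivity), by ring⟩
  refine ⟨_, ht γ hγ (z 0 / r.den) (by positivity), ?_⟩
  rw [hact, dist_pi_lt_iff hε, Fin.forall_fin_two]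
  simp only [Real.dist_eq, abs_lt, cons_val_zero, cons_val_one, sub_self]
  have hlo := (div_lt_iff₀ hz₀).mp hr₁
  have hhi := (lt_div_iff₀ hz₀).mp (add_div (z 1) ε (z 0) ▸ hr₂)
  refine ⟨⟨?_, ?_⟩, ?_, ?_⟩ <;> linarith

lemma Ici_subset_closure_of_forall_act_ray_mem {t : Set (Fin 2 → ℝ)}
    (ht : ∀ γ ∈ gammaPlus, ∀ s : ℝ, 0 ≤ s → act γ ![s, 0] ∈ t) : Ici 0 ⊆ closure t :=
  calc Ici (0 : Fin 2 → ℝ) = univ.pi fun _ => closure (Ioi 0) := by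
        rw [← pi_univ_Ici, closure_Ioi]; rfl
    _ = closure (univ.pi fun _ => Ioi 0) := (closure_pi_set _ _).symm
    _ ⊆ closure t := closure_minimal (fun z hz => mem_closure_of_forall_act_ray_mem ht
        (hz 0 trivial) (hz 1 trivial)) isClosed_closure

/-- Dani–Nogueira: for `ξ < 0` irrational, the intersection of the
semi-orbit `Γ₊ (ξ, 1)ᵀ` with the closed positive quadrant is dense in the quadrant. -/
theorem stmt18 (ξ : ℝ) (hξ : Irrational ξ) (hneg : ξ < 0) :
    ∀ z : Fin 2 → ℝ, 0 ≤ z 0 → 0 ≤ z 1 →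
      z ∈ closure {w : Fin 2 → ℝ | (∃ γ : Matrix (Fin 2) (Fin 2) ℤ,
        γ.det = 1 ∧ (∀ i j : Fin 2, 0 ≤ γ i j) ∧ w = act γ ![ξ, 1]) ∧
        0 ≤ w 0 ∧ 0 ≤ w 1} := by
  intro z hz₀ hz₁
  have hray : ∀ γ ∈ gammaPlus, ∀ s : ℝ, 0 ≤ s → act γ ![s, 0] ∈ closure (posOrbit ξ) :=
    fun γ hγ s hs => act_mem_closure_posOrbit hγ (ray_mem_closure_posOrbit hξ hneg hs)
  have hquad : Ici 0 ⊆ closure (posOrbit ξ) := by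
    simpa only [closure_closure] using Ici_subset_closure_of_forall_act_ray_mem hray
  refine closure_mono ?_ (hquad (Fin.forall_fin_two.mpr ⟨hz₀, hz₁⟩))
  rintro w ⟨⟨γ, ⟨hdet, hγ⟩, hw⟩, hw₀⟩
  exact ⟨⟨γ, hdet, hγ, hw⟩, hw₀ 0, hw₀ 1⟩
end
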